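/- arXiv:2002.03517 — 6 statements merged into one kernel-verified Lean document; each statement's English description precedes it below -/
import Mathlib

section
/- Let D be a probability distribution on the reals, let η be a random variable with law D, let ε ≥ 0, and suppose the total variation distance between D and D shifted by ε equals δ. Then E[|η|²] ≥ (ε²/8)·(1−δ). -/
open MeasureTheory

/-- Total variation distance between two measures: sup over measurable sets of
the absolute difference of masses. -/
noncomputable def tv {α : Type*} [MeasurableSpace α] (P Q : Measure α) : ℝ :=
  ⨆ A : {s : Set α // MeasurableSet s}, |(P A.1).toReal - (Q A.1).toReal|

theorem stmt0 (D : Measure ℝ) [IsProbabilityMeasure D] (ε δ : ℝ) (hε : 0 ≤ ε)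
    (hδ : δ = tv D (D.map (· + ε))) :
    ENNReal.ofReal (ε ^ 2 / 8 * (1 - δ)) ≤ ∫⁻ x, ENNReal.ofReal (|x| ^ 2) ∂D := by
  rcases le_or_gt (ε ^ 2 / 8 * (1 - δ)) 0 with h0 | h0
  · simp [ENNReal.ofReal_of_nonpos h0]
  have hQ : IsProbabilityMeasure (D.map (· + ε)) :=
    Measure.isProbabilityMeasure_map (measurable_add_const ε).aemeasurable
  set S : Set ℝ := Set.Ioo (-(ε/2)) (ε/2) with hSdef
  have hSm : MeasurableSet S := measurableSet_Ioo
  set p : ℝ := (D S).toReal with hpdef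
  set q : ℝ := ((D.map (· + ε)) S).toReal with hqdef
  -- bound on tv terms
  have hbdd : BddAbove (Set.range fun A : {s : Set ℝ // MeasurableSet s} =>
      |(D A.1).toReal - ((D.map (· + ε)) A.1).toReal|) := by
    refine ⟨2, ?_⟩
    rintro x ⟨A, rfl⟩
    have h1 : (D A.1).toReal ≤ 1 := by
      have := ENNReal.toReal_mono ENNReal.one_ne_top (prob_le_one (μ := D) (s := A.1))
      simpa using this
    have h1' : (0:ℝ) ≤ (D A.1).toReal := ENNReal.toReal_nonneg
    have h2 : ((D.map (· + ε)) A.1).toReal ≤ 1 := by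
      have := ENNReal.toReal_mono ENNReal.one_ne_top (prob_le_one (μ := D.map (· + ε)) (s := A.1))
      simpa using this
    have h2' : (0:ℝ) ≤ ((D.map (· + ε)) A.1).toReal := ENNReal.toReal_nonneg
    rw [abs_sub_le_iff]
    constructor <;> linarith
  have hδge : |p - q| ≤ δ := by
    rw [hδ]
    exact le_ciSup hbdd (⟨S, hSm⟩ : {s : Set ℝ // MeasurableSet s})
  -- Q S ≤ D Sᶜ
  have hqle : q ≤ 1 - p := by
    have hpre : (D.map (· + ε)) S = D ((· + ε) ⁻¹' S) :=
      Measure.map_apply (measurable_add_const ε) hSm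
    have hsub : (· + ε) ⁻¹' S ⊆ Sᶜ := by
      intro x hx
      simp only [Set.mem_preimage, hSdef, Set.mem_Ioo] at hx
      intro hxS
      simp only [hSdef, Set.mem_Ioo] at hxS
      linarith [hx.2, hxS.1]
    have hmono : (D.map (· + ε)) S ≤ D Sᶜ := hpre ▸ measure_mono hsub
    have hcompl : (D Sᶜ).toReal = 1 - p := by
      rw [prob_compl_eq_one_sub hSm]
      rw [ENNReal.toReal_sub_of_le (prob_le_one) ENNReal.one_ne_top]
      simp [hpdef]
    calc q ≤ (D Sᶜ).toReal :=
          ENNReal.toReal_mono (measure_ne_top D Sᶜ) hmono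
      _ = 1 - p := hcompl
  have hδ2 : 1 - δ ≤ 2 * (1 - p) := by
    have : p - q ≤ δ := le_trans (le_abs_self _) hδge
    linarith
  -- Chebyshev lower bound
  have key : ENNReal.ofReal ((ε/2)^2) * D Sᶜ ≤ ∫⁻ x, ENNReal.ofReal (|x| ^ 2) ∂D := by
    calc ENNReal.ofReal ((ε/2)^2) * D Sᶜ
        = ∫⁻ _ in Sᶜ, ENNReal.ofReal ((ε/2)^2) ∂D := by
          rw [setLIntegral_const, mul_comm]
      _ ≤ ∫⁻ x in Sᶜ, ENNReal.ofReal (|x| ^ 2) ∂D := by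
          refine setLIntegral_mono' hSm.compl fun x hx => ?_
          apply ENNReal.ofReal_le_ofReal
          have habs : ε/2 ≤ |x| := by
            simp only [Set.mem_compl_iff, hSdef, Set.mem_Ioo, not_and_or, not_lt] at hx
            rcases hx with h | h
            · rw [le_abs]; right; linarith
            · rw [le_abs]; left; linarith
          have := pow_le_pow_left₀ (by positivity) habs 2
          simpa using this
      _ ≤ ∫⁻ x, ENNReal.ofReal (|x| ^ 2) ∂D := setLIntegral_le_lintegral _ _
  refine le_trans ?_ key
  have heq : ENNReal.ofReal ((ε/2)^2) * D Sᶜ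
      = ENNReal.ofReal ((ε/2)^2 * (D Sᶜ).toReal) := by
    rw [ENNReal.ofReal_mul (by positivity), ENNReal.ofReal_toReal (measure_ne_top D Sᶜ)]
  rw [heq]
  apply ENNReal.ofReal_le_ofReal
  have hcompl : (D Sᶜ).toReal = 1 - p := by
    rw [prob_compl_eq_one_sub hSm]
    rw [ENNReal.toReal_sub_of_le (prob_le_one) ENNReal.one_ne_top]
    simp [hpdef]
  rw [hcompl]
  nlinarith [sq_nonneg ε, hδ2]
end

section
/- Let D be a probability distribution on ℝ, let η ~ D, ε ≥ 0, and δ = tv(D, D + ε) with δ > 0. Then E[|η|] ≥ (ε/8)·(1−δ)²/δ. -/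
open MeasureTheory

theorem stmt2 (D : Measure ℝ) [IsProbabilityMeasure D] (ε δ : ℝ) (hε : 0 ≤ ε)
    (hδ : δ = tv D (D.map (· + ε))) (hpos : 0 < δ) :
    ENNReal.ofReal (ε / 8 * ((1 - δ) ^ 2 / δ)) ≤ ∫⁻ x, ENNReal.ofReal |x| ∂D := by
  rcases eq_or_lt_of_le hε with rfl | hεpos
  · simp
  set Dε := D.map (· + ε) with hDε
  have hmeas : Measurable (· + ε : ℝ → ℝ) := measurable_add_const ε
  haveI : IsProbabilityMeasure Dε := Measure.isProbabilityMeasure_map hmeas.aemeasurable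
  -- boundedness of the sup
  have bdd : BddAbove (Set.range fun A : {s : Set ℝ // MeasurableSet s} =>
      |(D A.1).toReal - (Dε A.1).toReal|) := by
    refine ⟨1, ?_⟩
    rintro x ⟨A, rfl⟩
    have h1 : (D A.1).toReal ≤ 1 := by
      simpa using ENNReal.toReal_mono ENNReal.one_ne_top (prob_le_one (μ := D) (s := A.1))
    have h2 : (Dε A.1).toReal ≤ 1 := by
      simpa using ENNReal.toReal_mono ENNReal.one_ne_top (prob_le_one (μ := Dε) (s := A.1))
    have h3 : 0 ≤ (D A.1).toReal := ENNReal.toReal_nonneg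
    have h4 : 0 ≤ (Dε A.1).toReal := ENNReal.toReal_nonneg
    rw [abs_sub_le_iff]; constructor <;> linarith
  have hδ1 : δ ≤ 1 := by
    rw [hδ]
    apply ciSup_le
    rintro ⟨A, hA⟩
    have h1 : (D A).toReal ≤ 1 := by
      simpa using ENNReal.toReal_mono ENNReal.one_ne_top (prob_le_one (μ := D) (s := A))
    have h2 : (Dε A).toReal ≤ 1 := by
      simpa using ENNReal.toReal_mono ENNReal.one_ne_top (prob_le_one (μ := Dε) (s := A))
    have h3 : 0 ≤ (D A).toReal := ENNReal.toReal_nonneg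
    have h4 : 0 ≤ (Dε A).toReal := ENNReal.toReal_nonneg
    rw [abs_sub_le_iff]; constructor <;> linarith
  -- key: every Ico of length ε has mass ≤ δ
  have key : ∀ a : ℝ, (D (Set.Ico a (a + ε))).toReal ≤ δ := by
    intro a
    have hmap : Dε (Set.Iio (a + ε)) = D (Set.Iio a) := by
      rw [hDε, Measure.map_apply hmeas measurableSet_Iio]
      congr 1
      ext x
      simp
    have hun : Set.Iio a ∪ Set.Ico a (a + ε) = Set.Iio (a + ε) :=
      Set.Iio_union_Ico_eq_Iio (le_add_of_nonneg_right hε)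
    have hdisj : Disjoint (Set.Iio a) (Set.Ico a (a + ε)) := by
      rw [Set.disjoint_left]
      rintro x hx ⟨hx2, _⟩
      exact absurd hx2 (not_le.2 hx)
    have hsum : D (Set.Iio (a + ε)) = D (Set.Iio a) + D (Set.Ico a (a + ε)) := by
      rw [← hun, measure_union hdisj (measurableSet_Ico)]
    have hfin : ∀ s : Set ℝ, D s ≠ ⊤ := fun s => measure_ne_top D s
    have hr : (D (Set.Ico a (a + ε))).toReal
        = (D (Set.Iio (a + ε))).toReal - (Dε (Set.Iio (a + ε))).toReal := by
      rw [hmap, hsum, ENNReal.toReal_add (hfin _) (hfin _)]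
      ring
    rw [hr]
    calc (D (Set.Iio (a + ε))).toReal - (Dε (Set.Iio (a + ε))).toReal
        ≤ |(D (Set.Iio (a + ε))).toReal - (Dε (Set.Iio (a + ε))).toReal| := le_abs_self _
      _ ≤ δ := by
          rw [hδ]
          exact le_ciSup bdd ⟨Set.Iio (a + ε), measurableSet_Iio⟩
  -- set up T and the covering
  set c : ℝ := (1 - δ) / (2 * δ) with hc
  have hc0 : 0 ≤ c := div_nonneg (by linarith) (by linarith)
  set T : ℝ := ε * (1 - δ) / (4 * δ) with hT
  have hT0 : 0 ≤ T := div_nonneg (by nlinarith) (by linarith)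
  set n : ℕ := ⌊c⌋₊ + 1 with hn
  have hcover : Set.Icc (-T) T ⊆
      ⋃ i ∈ Finset.range n, Set.Ico (-T + i * ε) (-T + i * ε + ε) := by
    intro x hx
    obtain ⟨hx1, hx2⟩ := hx
    set i : ℕ := ⌊(x + T) / ε⌋₊ with hi
    have hxT : 0 ≤ (x + T) := by linarith
    have hle : (i : ℝ) * ε ≤ x + T := by
      have := Nat.floor_le (div_nonneg hxT hε)
      calc (i : ℝ) * ε ≤ (x + T) / ε * ε := by
            apply mul_le_mul_of_nonneg_right this hε
        _ = x + T := by field_simp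
    have hlt : x + T < (i + 1 : ℝ) * ε := by
      have := Nat.lt_floor_add_one ((x + T) / ε)
      calc x + T = (x + T) / ε * ε := by field_simp
        _ < (i + 1 : ℝ) * ε := by
            apply mul_lt_mul_of_pos_right _ hεpos
            exact_mod_cast this
    have hin : i < n := by
      have h2T : 2 * T ≤ c * ε := by
        rw [hT, hc]; field_simp; ring_nf; nlinarith
      have : (i : ℝ) ≤ c := by
        have h1 : (i : ℝ) * ε ≤ c * ε := by linarith
        exact le_of_mul_le_mul_right h1 hεpos
      have hle2 : i ≤ ⌊c⌋₊ := Nat.le_floor this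
      omega
    refine Set.mem_biUnion (Finset.mem_range.2 hin) ?_
    constructor <;> [linarith; linarith]
  have hIco : ∀ i : ℕ, (D (Set.Ico (-T + i * ε) (-T + i * ε + ε))).toReal ≤ δ :=
    fun i => key (-T + i * ε)
  have hmass : (D (Set.Icc (-T) T)).toReal ≤ (1 + δ) / 2 := by
    have h1 : D (Set.Icc (-T) T)
        ≤ ∑ i ∈ Finset.range n, D (Set.Ico (-T + i * ε) (-T + i * ε + ε)) :=
      le_trans (measure_mono hcover) (measure_biUnion_finset_le _ _)
    have hfin : (∑ i ∈ Finset.range n, D (Set.Ico (-T + i * ε) (-T + i * ε + ε))) ≠ ⊤ :=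
      (ENNReal.sum_lt_top.2 fun i _ => measure_lt_top D _).ne
    have h3 : (D (Set.Icc (-T) T)).toReal
        ≤ ∑ i ∈ Finset.range n, (D (Set.Ico (-T + i * ε) (-T + i * ε + ε))).toReal := by
      rw [← ENNReal.toReal_sum fun i _ => measure_ne_top D _]
      exact ENNReal.toReal_mono hfin h1
    have h4 : ∑ i ∈ Finset.range n, (D (Set.Ico (-T + i * ε) (-T + i * ε + ε))).toReal
        ≤ (n : ℝ) * δ := by
      calc ∑ i ∈ Finset.range n, (D (Set.Ico (-T + i * ε) (-T + i * ε + ε))).toReal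
          ≤ ∑ _i ∈ Finset.range n, δ := Finset.sum_le_sum fun i _ => hIco i
        _ = (n : ℝ) * δ := by simp [Finset.sum_const, Finset.card_range, nsmul_eq_mul]
    have h5 : (n : ℝ) ≤ c + 1 := by
      have := Nat.floor_le hc0
      rw [hn]; push_cast; linarith
    have h6 : (n : ℝ) * δ ≤ (1 + δ) / 2 := by
      have h7 : (c + 1) * δ = (1 + δ) / 2 := by rw [hc]; field_simp; ring
      nlinarith
    linarith
  have hcompl : ENNReal.ofReal ((1 - δ) / 2) ≤ D (Set.Icc (-T) T)ᶜ := by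
    apply ENNReal.ofReal_le_of_le_toReal
    have hcle : D (Set.Icc (-T) T) ≤ 1 := prob_le_one
    rw [measure_compl measurableSet_Icc (measure_ne_top D _), measure_univ,
      ENNReal.toReal_sub_of_le hcle ENNReal.one_ne_top]
    simp only [ENNReal.toReal_one]
    linarith
  calc ENNReal.ofReal (ε / 8 * ((1 - δ) ^ 2 / δ))
      = ENNReal.ofReal T * ENNReal.ofReal ((1 - δ) / 2) := by
        rw [← ENNReal.ofReal_mul hT0]
        congr 1
        rw [hT]
        field_simp
        ring
    _ ≤ ENNReal.ofReal T * D (Set.Icc (-T) T)ᶜ := mul_le_mul_right hcompl _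
    _ = ∫⁻ _ in (Set.Icc (-T) T)ᶜ, ENNReal.ofReal T ∂D := (setLIntegral_const _ _).symm
    _ ≤ ∫⁻ x in (Set.Icc (-T) T)ᶜ, ENNReal.ofReal |x| ∂D := by
        apply setLIntegral_mono measurable_abs.ennreal_ofReal
        intro x hx
        apply ENNReal.ofReal_le_ofReal
        simp only [Set.mem_compl_iff, Set.mem_Icc, not_and_or, not_le] at hx
        rcases hx with h | h
        · rw [abs_of_neg (by linarith)]; linarith
        · rw [abs_of_pos (by linarith)]; linarith
    _ ≤ ∫⁻ x, ENNReal.ofReal |x| ∂D := setLIntegral_le_lintegral _ _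
end

section
/- Let D be a probability distribution on ℝ, let η ~ D, ε ≥ 0, and δ = tv(D, D + ε) with δ > 0. Then E[|η|²] ≥ (ε²/200)·(1−δ)/δ². -/
/-!
Shifting by `k * ε` is the `k`-fold iterate of shifting by `ε`, so it moves the mass of any
set by at most `k * δ`. Comparing `[-c, ∞)` with its translate `[c, ∞)`, where `c = k ε / 2`,
shows that the window `[-c, c)` carries mass at most `k δ`, hence `|η| ≥ c` with probability
at least `1 - k δ` and `E|η|² ≥ (k ε / 2)² (1 - k δ)`. Taking `k = ⌊1 / (2δ)⌋` when `δ ≤ 1/4`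
and `k = 1` when `1/4 < δ ≤ 1` gives the bound, which is trivial for `δ > 1`.
-/

open MeasureTheory

section TotalVariation

variable {α : Type*} [MeasurableSpace α]

lemma abs_measureReal_sub_le_tv (P Q : Measure α) [IsZeroOrProbabilityMeasure P]
    [IsZeroOrProbabilityMeasure Q] {A : Set α} (hA : MeasurableSet A) :
    |P.real A - Q.real A| ≤ tv P Q := by
  refine le_ciSup (f := fun A : {s : Set α // MeasurableSet s} => |P.real A.1 - Q.real A.1|)
    ⟨1, ?_⟩ ⟨A, hA⟩
  rintro _ ⟨B, rfl⟩
  exact abs_sub_le_of_nonneg_of_le measureReal_nonneg measureReal_le_one measureReal_nonneg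
    measureReal_le_one

lemma abs_measureReal_sub_preimage_iterate_le (P : Measure α) [IsZeroOrProbabilityMeasure P]
    {f : α → α} (hf : Measurable f) (k : ℕ) {A : Set α} (hA : MeasurableSet A) :
    |P.real A - P.real (f^[k] ⁻¹' A)| ≤ k * tv P (P.map f) := by
  induction k with
  | zero => simp
  | succ n ih =>
    have hB : MeasurableSet (f^[n] ⁻¹' A) := hf.iterate n hA
    have hstep : |P.real (f^[n] ⁻¹' A) - P.real (f⁻¹' (f^[n] ⁻¹' A))| ≤ tv P (P.map f) := by
      simpa [Measure.real, Measure.map_apply hf hB] using abs_measureReal_sub_le_tv P (P.map f) hB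
    rw [Function.iterate_succ, Set.preimage_comp]
    push_cast
    linarith [abs_sub_le (P.real A) (P.real (f^[n] ⁻¹' A)) (P.real (f⁻¹' (f^[n] ⁻¹' A)))]

end TotalVariation

lemma measureReal_Ico_le_mul_tv (D : Measure ℝ) [IsProbabilityMeasure D] (ε : ℝ) (k : ℕ)
    {a : ℝ} (ha : 0 ≤ k * ε) :
    D.real (Set.Ico a (a + k * ε)) ≤ k * tv D (D.map (· + ε)) := by
  have hshift : (· + ε)^[k] ⁻¹' Set.Ici (a + k * ε) = Set.Ici a := by
    rw [add_right_iterate, nsmul_eq_mul, Set.preimage_add_const_Ici, add_sub_cancel_right]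
  have hIco :
      D.real (Set.Ico a (a + k * ε)) = D.real (Set.Ici a) - D.real (Set.Ici (a + k * ε)) := by
    rw [← Set.Ici_sdiff_Ici, measureReal_sdiff (Set.Ici_subset_Ici.2 (by linarith))
      measurableSet_Ici]
  have hiter := abs_measureReal_sub_preimage_iterate_le D (measurable_add_const ε) k
    (measurableSet_Ici (a := a + k * ε))
  rw [hshift] at hiter
  linarith [neg_abs_le (D.real (Set.Ici (a + k * ε)) - D.real (Set.Ici a))]

lemma one_sub_mul_tv_le_measureReal_abs_ge (D : Measure ℝ) [IsProbabilityMeasure D] {ε : ℝ}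
    (hε : 0 ≤ ε) (k : ℕ) :
    1 - k * tv D (D.map (· + ε)) ≤ D.real {x | k * ε / 2 ≤ |x|} := by
  have hwindow : {x : ℝ | k * ε / 2 ≤ |x|}ᶜ ⊆ Set.Ico (-(k * ε / 2)) (-(k * ε / 2) + k * ε) := by
    intro x hx
    simp only [Set.mem_compl_iff, Set.mem_ofPred_eq, not_le, abs_lt] at hx
    exact ⟨hx.1.le, by linarith [hx.2]⟩
  have hcompl := probReal_compl_eq_one_sub (μ := D)
    (measurableSet_le measurable_const measurable_abs : MeasurableSet {x : ℝ | k * ε / 2 ≤ |x|})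
  linarith [measureReal_mono (μ := D) hwindow,
    measureReal_Ico_le_mul_tv D ε k (a := -(k * ε / 2)) (by positivity)]

lemma ofReal_sq_mul_measure_abs_ge_le_lintegral {α : Type*} [MeasurableSpace α] (μ : Measure α)
    {f : α → ℝ} (hf : AEMeasurable f μ) {c : ℝ} (hc : 0 ≤ c) :
    ENNReal.ofReal (c ^ 2) * μ {x | c ≤ |f x|} ≤ ∫⁻ x, ENNReal.ofReal (|f x| ^ 2) ∂μ := by
  refine le_trans (mul_le_mul_right (measure_mono fun x hx => ?_) _)
    (mul_meas_ge_le_lintegral₀ (by fun_prop) _)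
  exact ENNReal.ofReal_le_ofReal (pow_le_pow_left₀ hc hx 2)

lemma exists_nat_le_sq_mul_one_sub {δ : ℝ} (hδ : 0 < δ) :
    ∃ k : ℕ, (1 - δ) / (50 * δ ^ 2) ≤ k ^ 2 * (1 - k * δ) := by
  rcases le_or_gt δ (1 / 4) with hsmall | hlarge
  · refine ⟨⌊1 / (2 * δ)⌋₊, ?_⟩
    set k : ℕ := ⌊1 / (2 * δ)⌋₊
    have hupper : (k : ℝ) * δ ≤ 1 / 2 := by
      have := Nat.floor_le (a := 1 / (2 * δ)) (by positivity)
      rw [le_div_iff₀ (by positivity)] at this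
      linarith
    have hlower : 1 / 4 ≤ (k : ℝ) * δ := by
      have := Nat.lt_floor_add_one (1 / (2 * δ))
      rw [div_lt_iff₀ (by positivity)] at this
      nlinarith
    rw [div_le_iff₀ (by positivity)]
    nlinarith [mul_le_mul hlower hlower (by norm_num) (by linarith)]
  · rcases le_or_gt δ 1 with hle | hgt
    · refine ⟨1, ?_⟩
      rw [div_le_iff₀ (by positivity)]
      push_cast
      nlinarith [mul_nonneg (by nlinarith : (0 : ℝ) ≤ 50 * δ ^ 2 - 1) (by linarith : 0 ≤ 1 - δ)]
    · refine ⟨0, ?_⟩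
      simpa using div_nonpos_of_nonpos_of_nonneg (by linarith) (by positivity)

theorem stmt3 (D : Measure ℝ) [IsProbabilityMeasure D] (ε δ : ℝ) (hε : 0 ≤ ε)
    (hδ : δ = tv D (D.map (· + ε))) (hpos : 0 < δ) :
    ENNReal.ofReal (ε ^ 2 / 200 * ((1 - δ) / δ ^ 2)) ≤
      ∫⁻ x, ENNReal.ofReal (|x| ^ 2) ∂D := by
  obtain ⟨k, hk⟩ := exists_nat_le_sq_mul_one_sub hpos
  have hmass := one_sub_mul_tv_le_measureReal_abs_ge D hε k
  rw [← hδ] at hmass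
  calc ENNReal.ofReal (ε ^ 2 / 200 * ((1 - δ) / δ ^ 2))
      ≤ ENNReal.ofReal ((k * ε / 2) ^ 2) * D {x | k * ε / 2 ≤ |x|} := by
        rw [← ofReal_measureReal, ← ENNReal.ofReal_mul (by positivity)]
        apply ENNReal.ofReal_le_ofReal
        calc ε ^ 2 / 200 * ((1 - δ) / δ ^ 2) = (ε / 2) ^ 2 * ((1 - δ) / (50 * δ ^ 2)) := by
              field_simp; ring
          _ ≤ (ε / 2) ^ 2 * (k ^ 2 * (1 - k * δ)) := by gcongr
          _ = (k * ε / 2) ^ 2 * (1 - k * δ) := by ring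
          _ ≤ (k * ε / 2) ^ 2 * D.real {x | k * ε / 2 ≤ |x|} := by gcongr
    _ ≤ ∫⁻ x, ENNReal.ofReal (|x| ^ 2) ∂D :=
        ofReal_sq_mul_measure_abs_ge_le_lintegral D aemeasurable_id (by positivity)
end

section
/- Let D be a distribution on ℝᵈ such that for every (possibly randomized) classifier f : ℝᵈ → Y, the smoothed classifier g(·; D, f) is (A, δ)-robust for a set A ⊆ ℝᵈ. Then for every v ∈ A, tv(D, D + v) ≤ δ. -/
open MeasureTheory

attribute [local instance] Classical.propDecidable

/-- The score of class `y` at point `x` for the smoothing distribution `D` and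
(randomized) base classifier `f`: the probability that `f(x + η) = y` for `η ~ D`. -/
noncomputable def score {d : ℕ} {Y : Type} (D : Measure (EuclideanSpace ℝ (Fin d)))
    (f : EuclideanSpace ℝ (Fin d) → PMF Y) (y : Y) (x : EuclideanSpace ℝ (Fin d)) : ENNReal :=
  ∫⁻ η, f (x + η) y ∂D

/-- The smoothed classifier: outputs the class with the highest score, breaking
ties lexicographically (i.e. choosing the least maximizer). -/
noncomputable def gOut {d : ℕ} {Y : Type} [Fintype Y] [LinearOrder Y] [Nonempty Y]
    (D : Measure (EuclideanSpace ℝ (Fin d))) (f : EuclideanSpace ℝ (Fin d) → PMF Y)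
    (x : EuclideanSpace ℝ (Fin d)) : Y :=
  (Finset.univ.filter fun a : Y => ∀ y : Y, score D f y x ≤ score D f a x).min' (by
    obtain ⟨a, -, ha⟩ := Finset.exists_max_image (Finset.univ : Finset Y)
      (fun y => score D f y x) ⟨Classical.arbitrary Y, Finset.mem_univ _⟩
    exact ⟨a, Finset.mem_filter.mpr ⟨Finset.mem_univ _, fun y => ha y (Finset.mem_univ _)⟩⟩)

/-- The gap between the highest score and the runner-up score at `x`. -/
noncomputable def gap {d : ℕ} {Y : Type} [Fintype Y] [LinearOrder Y] [Nonempty Y]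
    (D : Measure (EuclideanSpace ℝ (Fin d))) (f : EuclideanSpace ℝ (Fin d) → PMF Y)
    (x : EuclideanSpace ℝ (Fin d)) : ENNReal :=
  score D f (gOut D f x) x - ⨆ y : {y : Y // y ≠ gOut D f x}, score D f y.1 x

/-- `(A, δ)`-robustness of the smoothed classifier. -/
def Robust {d : ℕ} {Y : Type} [Fintype Y] [LinearOrder Y] [Nonempty Y]
    (D : Measure (EuclideanSpace ℝ (Fin d))) (A : Set (EuclideanSpace ℝ (Fin d))) (δ : ℝ)
    (f : EuclideanSpace ℝ (Fin d) → PMF Y) : Prop :=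
  ∀ x v, v ∈ A → ENNReal.ofReal δ < gap D f x → gOut D f (x + v) = gOut D f x

/-!
If `D(S) - (D + v)(S) > δ` for some measurable `S`, consider the randomized classifier that outputs
`y₀` with probability `(𝟙_S + (D + v)(Sᶜ)) / 2` and `y₁ < y₀` with the complementary probability
`(𝟙_{Sᶜ} + (D + v)(S)) / 2`. At `0` the score of `y₀` exceeds that of `y₁` by `D(S) - (D + v)(S) > δ`,
so the smoothed classifier outputs `y₀` with gap larger than `δ`; at `v` the two scores coincide and
the tie is broken towards `y₁`, contradicting robustness. Applying this to `S` and `Sᶜ` bounds the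
total variation distance.
-/

open scoped ENNReal

lemma tv_le_of_forall_sub_le {α : Type*} [MeasurableSpace α] (P Q : Measure α)
    [IsProbabilityMeasure P] [IsProbabilityMeasure Q] {δ : ℝ} (h : ∀ s, MeasurableSet s → (P s).toReal - (Q s).toReal ≤ δ) : tv P Q ≤ δ := by
  have : Nonempty {s : Set α // MeasurableSet s} := ⟨⟨∅, .empty⟩⟩
  refine ciSup_le fun ⟨s, hs⟩ => abs_sub_le_iff.mpr ⟨h s hs, ?_⟩
  have hc := h sᶜ hs.compl
  simp only [prob_compl_eq_one_sub hs, ENNReal.toReal_sub_of_le prob_le_one ENNReal.one_ne_top,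
    ENNReal.toReal_one] at hc
  linarith

lemma lintegral_indicator_add_const_div_two {α : Type*} [MeasurableSpace α] [Add α]
    [MeasurableAdd α] (μ : Measure α) [IsProbabilityMeasure μ] {T : Set α} (hT : MeasurableSet T)
    (x : α) (c : ℝ≥0∞) :
    ∫⁻ η, (T.indicator 1 (x + η) + c) / 2 ∂μ = (μ.map (x + ·) T + c) / 2 := by
  have hmeas : Measurable (x + · : α → α) := measurable_const_add x
  simp_rw [div_eq_mul_inv]
  rw [lintegral_mul_const' _ _ (by simp), lintegral_add_right _ measurable_const, lintegral_const,
    measure_univ, mul_one, Measure.map_apply hmeas hT, ← lintegral_indicator_one (hT.preimage hmeas)]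
  rfl

section TwoClass

variable {α Y : Type*} [Fintype Y]

noncomputable def twoClassClassifier (y₀ y₁ : Y) (u₀ u₁ : α → ℝ≥0∞)
    (hu : ∀ z, u₀ z + u₁ z = 1) : α → PMF Y := fun z =>
  PMF.ofFintype (fun y => (if y = y₀ then u₀ z else 0) + (if y = y₁ then u₁ z else 0)) (by
    rw [Finset.sum_add_distrib, Finset.sum_ite_eq', Finset.sum_ite_eq']
    simp [hu])

variable {y₀ y₁ : Y} {u₀ u₁ : α → ℝ≥0∞} {hu : ∀ z, u₀ z + u₁ z = 1}

lemma twoClassClassifier_apply_left (h : y₀ ≠ y₁) (z : α) :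
    twoClassClassifier y₀ y₁ u₀ u₁ hu z y₀ = u₀ z := by
  simp [twoClassClassifier, h]

lemma twoClassClassifier_apply_right (h : y₀ ≠ y₁) (z : α) :
    twoClassClassifier y₀ y₁ u₀ u₁ hu z y₁ = u₁ z := by
  simp [twoClassClassifier, h.symm]

lemma twoClassClassifier_apply_of_ne {y : Y} (h₀ : y ≠ y₀) (h₁ : y ≠ y₁) (z : α) :
    twoClassClassifier y₀ y₁ u₀ u₁ hu z y = 0 := by
  simp [twoClassClassifier, h₀, h₁]

end TwoClass

section SmoothedClassifier

variable {d : ℕ} {Y : Type} [Fintype Y] [LinearOrder Y] [Nonempty Y]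
  {D : Measure (EuclideanSpace ℝ (Fin d))} {f : EuclideanSpace ℝ (Fin d) → PMF Y}
  {x : EuclideanSpace ℝ (Fin d)}

lemma gOut_le_of_forall_score_le {b : Y} (h : ∀ y, score D f y x ≤ score D f b x) :
    gOut D f x ≤ b :=
  Finset.min'_le _ _ (Finset.mem_filter.mpr ⟨Finset.mem_univ _, h⟩)

lemma score_le_score_gOut (y : Y) : score D f y x ≤ score D f (gOut D f x) x := by
  unfold gOut
  exact (Finset.mem_filter.mp (Finset.min'_mem
    (Finset.univ.filter fun a : Y => ∀ y : Y, score D f y x ≤ score D f a x) _)).2 y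

lemma gOut_eq_of_forall_score_lt {b : Y} (h : ∀ y ≠ b, score D f y x < score D f b x) :
    gOut D f x = b := by
  by_contra hne
  exact (h _ hne).not_ge (score_le_score_gOut b)

lemma lt_gap_of_forall_score_le {ε s : ℝ≥0∞} (h : ∀ y ≠ gOut D f x, score D f y x ≤ s)
    (hlt : ε + s < score D f (gOut D f x) x) : ε < gap D f x :=
  (lt_tsub_iff_right.mpr hlt).trans_le
    (tsub_le_tsub_left (iSup_le fun y : {y // y ≠ gOut D f x} => h y.1 y.2) _)

lemma not_robust_of_score_tie {A : Set (EuclideanSpace ℝ (Fin d))} {δ : ℝ}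
    {v : EuclideanSpace ℝ (Fin d)} {y₀ y₁ : Y} (hy : y₁ < y₀)
    (hsupp : ∀ x y, y ≠ y₀ → y ≠ y₁ → score D f y x = 0)
    (hwin : ENNReal.ofReal δ + score D f y₁ x < score D f y₀ x)
    (htie : score D f y₀ (x + v) ≤ score D f y₁ (x + v)) (hv : v ∈ A) : ¬ Robust D A δ f := by
  intro hrob
  have hle₁ (x') (y) (hy₀ : y ≠ y₀) : score D f y x' ≤ score D f y₁ x' := by
    rcases eq_or_ne y y₁ with rfl | hy₁
    · exact le_rfl
    · exact (hsupp x' y hy₀ hy₁).symm ▸ zero_le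
  have hgx : gOut D f x = y₀ :=
    gOut_eq_of_forall_score_lt fun y hy₀ => (hle₁ x y hy₀).trans_lt (le_add_self.trans_lt hwin)
  have hgap : ENNReal.ofReal δ < gap D f x := by
    apply lt_gap_of_forall_score_le (s := score D f y₁ x) <;> rw [hgx]
    exacts [hle₁ x, hwin]
  have hgxv : gOut D f (x + v) ≤ y₁ := by
    refine gOut_le_of_forall_score_le fun y => ?_
    rcases eq_or_ne y y₀ with rfl | hy₀
    exacts [htie, hle₁ _ y hy₀]
  exact (hgx ▸ hrob x v hv hgap ▸ hgxv).not_gt hy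

end SmoothedClassifier

section Robustness

variable {d : ℕ} {Y : Type} [Fintype Y] [LinearOrder Y] [Nontrivial Y]
  {D : Measure (EuclideanSpace ℝ (Fin d))} [IsProbabilityMeasure D]
  {A : Set (EuclideanSpace ℝ (Fin d))} {δ : ℝ} {v : EuclideanSpace ℝ (Fin d)}

theorem measure_sub_map_add_le_of_robust (hδ : 0 ≤ δ)
    (hrob : ∀ f : EuclideanSpace ℝ (Fin d) → PMF Y, Robust D A δ f) (hv : v ∈ A)
    {S : Set (EuclideanSpace ℝ (Fin d))} (hS : MeasurableSet S) :
    (D S).toReal - (D.map (· + v) S).toReal ≤ δ := by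
  set Q := D.map (· + v)
  have : IsProbabilityMeasure Q :=
    Measure.isProbabilityMeasure_map (measurable_add_const v).aemeasurable
  by_contra! hlt
  obtain ⟨y₁, y₀, hy⟩ := exists_pair_lt Y
  set f := twoClassClassifier y₀ y₁ (fun z => (S.indicator 1 z + Q Sᶜ) / 2)
    (fun z => (Sᶜ.indicator 1 z + Q S) / 2) (fun z => by
      rw [← ENNReal.add_div, add_add_add_comm, Set.indicator_self_add_compl_apply, add_comm (Q Sᶜ),
        measure_add_measure_compl hS, measure_univ, Pi.one_apply, one_add_one_eq_two,
        ENNReal.div_self two_ne_zero ENNReal.ofNat_ne_top])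
  have hscore₀ (x) : score D f y₀ x = (D.map (x + ·) S + Q Sᶜ) / 2 := by
    simp only [score, f, twoClassClassifier_apply_left hy.ne',
      lintegral_indicator_add_const_div_two D hS]
  have hscore₁ (x) : score D f y₁ x = (D.map (x + ·) Sᶜ + Q S) / 2 := by
    simp only [score, f, twoClassClassifier_apply_right hy.ne',
      lintegral_indicator_add_const_div_two D hS.compl]
  have hscore (x y) (h₀ : y ≠ y₀) (h₁ : y ≠ y₁) : score D f y x = 0 := by
    simp [score, f, twoClassClassifier_apply_of_ne h₀ h₁]
  have hmap₀ : D.map (0 + ·) = D := by simp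
  have hmapv : D.map (v + ·) = Q := by simp_rw [add_comm v]; rfl
  have hwin : ENNReal.ofReal δ + score D f y₁ 0 < score D f y₀ 0 := by
    rw [hscore₀, hscore₁, hmap₀, ← ENNReal.toReal_lt_toReal (by finiteness) (by finiteness),
      ENNReal.toReal_add (by finiteness) (by finiteness), ENNReal.toReal_ofReal hδ]
    simp only [ENNReal.toReal_div, ENNReal.toReal_add (measure_ne_top _ _) (measure_ne_top _ _),
      ENNReal.toReal_ofNat, ← measureReal_def, probReal_compl_eq_one_sub hS] at hlt ⊢
    linarith
  refine not_robust_of_score_tie (x := 0) hy hscore hwin ?_ hv (hrob f)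
  rw [zero_add, hscore₀, hscore₁, hmapv, add_comm]

end Robustness

theorem stmt9_general {d : ℕ} {Y : Type} [Fintype Y] [LinearOrder Y] [Nontrivial Y]
    (D : Measure (EuclideanSpace ℝ (Fin d))) [IsProbabilityMeasure D]
    (A : Set (EuclideanSpace ℝ (Fin d))) (δ : ℝ) (hδ0 : 0 ≤ δ)
    (hrob : ∀ f : EuclideanSpace ℝ (Fin d) → PMF Y, Robust D A δ f) :
    ∀ v ∈ A, tv D (D.map (· + v)) ≤ δ := by
  intro v hv
  have : IsProbabilityMeasure (D.map (· + v)) :=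
    Measure.isProbabilityMeasure_map (measurable_add_const v).aemeasurable
  exact tv_le_of_forall_sub_le _ _ fun S hS => measure_sub_map_add_le_of_robust hδ0 hrob hv hS

theorem stmt9 {d : ℕ} {Y : Type} [Fintype Y] [LinearOrder Y] [Nontrivial Y]
    (D : Measure (EuclideanSpace ℝ (Fin d))) [IsProbabilityMeasure D]
    (A : Set (EuclideanSpace ℝ (Fin d))) (δ : ℝ) (hδ0 : 0 ≤ δ) (hδ1 : δ ≤ 1)
    (hrob : ∀ f : EuclideanSpace ℝ (Fin d) → PMF Y, Robust D A δ f) :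
    ∀ v ∈ A, tv D (D.map (· + v)) ≤ δ :=
  stmt9_general D A δ hδ0 hrob
end

section
/- Let D be a probability distribution on ℝ, let η ~ D, ε ≥ 0, and δ = tv(D, D + ε). Then E[|η|] ≥ (ε/4)·(1−δ). -/
open MeasureTheory

theorem stmt13 (D : Measure ℝ) [IsProbabilityMeasure D] (ε δ : ℝ) (hε : 0 ≤ ε)
    (hδ : δ = tv D (D.map (· + ε))) :
    ENNReal.ofReal (ε / 4 * (1 - δ)) ≤ ∫⁻ x, ENNReal.ofReal |x| ∂D := by
  rcases le_or_gt (ε / 4 * (1 - δ)) 0 with h0 | h0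
  · simp [ENNReal.ofReal_of_nonpos h0]
  have h1δ : 0 < 1 - δ := by nlinarith
  have hεpos : 0 < ε := by nlinarith
  haveI : IsProbabilityMeasure (D.map (· + ε)) :=
    Measure.isProbabilityMeasure_map (measurable_add_const ε).aemeasurable
  set I1 : Set ℝ := Set.Ioo (-(ε/2)) (ε/2) with hI1
  set I2 : Set ℝ := Set.Ioo (ε/2) (ε/2*3) with hI2
  have hmap : (D.map (· + ε)) I2 = D I1 := by
    rw [Measure.map_apply (measurable_add_const ε) measurableSet_Ioo]
    congr 1
    ext x
    simp only [hI1, hI2, Set.mem_preimage, Set.mem_Ioo]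
    constructor <;> rintro ⟨h1, h2⟩ <;> constructor <;> linarith
  set p := (D I1).toReal with hp
  set q := (D I2).toReal with hq
  have hbdd : BddAbove (Set.range fun A : {s : Set ℝ // MeasurableSet s} =>
      |(D A.1).toReal - ((D.map (· + ε)) A.1).toReal|) := by
    refine ⟨2, ?_⟩
    rintro _ ⟨A, rfl⟩
    have h1 : (D A.1).toReal ≤ 1 := by
      simpa using ENNReal.toReal_mono ENNReal.one_ne_top prob_le_one
    have h2 : ((D.map (· + ε)) A.1).toReal ≤ 1 := by
      simpa using ENNReal.toReal_mono ENNReal.one_ne_top prob_le_one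
    have h3 : 0 ≤ (D A.1).toReal := ENNReal.toReal_nonneg
    have h4 : 0 ≤ ((D.map (· + ε)) A.1).toReal := ENNReal.toReal_nonneg
    rw [abs_le]
    constructor <;> linarith
  have htv : p - q ≤ δ := by
    rw [hδ]
    have hle : |(D I2).toReal - ((D.map (· + ε)) I2).toReal| ≤ tv D (D.map (· + ε)) :=
      le_ciSup hbdd ⟨I2, measurableSet_Ioo⟩
    rw [hmap] at hle
    calc p - q ≤ |q - p| := by rw [abs_sub_comm]; exact le_abs_self _
      _ ≤ tv D (D.map (· + ε)) := hle
  have hdisj : Disjoint I1 I2 := by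
    rw [Set.disjoint_left]
    intro x hx hx'
    simp only [hI1, hI2, Set.mem_Ioo] at hx hx'
    linarith
  have hsum : p + q ≤ 1 := by
    have h1 : D I1 + D I2 = D (I1 ∪ I2) :=
      (measure_union hdisj measurableSet_Ioo).symm
    have h2 : D (I1 ∪ I2) ≤ 1 := prob_le_one
    have h3 : D I1 + D I2 ≤ 1 := h1 ▸ h2
    have := ENNReal.toReal_mono ENNReal.one_ne_top h3
    rwa [ENNReal.toReal_add (measure_ne_top _ _) (measure_ne_top _ _),
      ENNReal.toReal_one] at this
  have hpnn : 0 ≤ p := ENNReal.toReal_nonneg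
  have hqnn : 0 ≤ q := ENNReal.toReal_nonneg
  have hp1 : p ≤ 1 := by linarith
  -- Markov
  have hmarkov := mul_meas_ge_le_lintegral₀ (μ := D)
    (f := fun x => ENNReal.ofReal |x|)
    ((measurable_abs.ennreal_ofReal).aemeasurable) (ENNReal.ofReal (ε/2))
  have hset : {x : ℝ | ENNReal.ofReal (ε/2) ≤ ENNReal.ofReal |x|} = I1ᶜ := by
    ext x
    rw [Set.mem_setOf_eq, Set.mem_compl_iff, ENNReal.ofReal_le_ofReal_iff (abs_nonneg x),
      ← not_lt]
    exact not_congr (by rw [abs_lt]; exact Iff.rfl)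
  rw [hset] at hmarkov
  have hcompl : D I1ᶜ = ENNReal.ofReal (1 - p) := by
    rw [measure_compl measurableSet_Ioo (measure_ne_top _ _), measure_univ]
    have hDI1 : D I1 = ENNReal.ofReal p := (ENNReal.ofReal_toReal (measure_ne_top _ _)).symm
    rw [hDI1]
    refine ENNReal.sub_eq_of_eq_add ENNReal.ofReal_ne_top ?_
    rw [← ENNReal.ofReal_add (by linarith) hpnn]
    norm_num
  calc ENNReal.ofReal (ε / 4 * (1 - δ))
      ≤ ENNReal.ofReal (ε / 2 * (1 - p)) := by
        apply ENNReal.ofReal_le_ofReal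
        nlinarith
    _ = ENNReal.ofReal (ε / 2) * ENNReal.ofReal (1 - p) :=
        ENNReal.ofReal_mul (by linarith)
    _ = ENNReal.ofReal (ε / 2) * D I1ᶜ := by rw [hcompl]
    _ ≤ ∫⁻ x, ENNReal.ofReal |x| ∂D := hmarkov
end

section
/- For the uniform distribution U_r on [−r,r]ᵈ and any ε ∈ [0, r], the maximum over all v with ‖v‖_∞ ≤ ε of tv(U_r, U_r + v) equals 1 − (1 − ε/(2r))ᵈ, attained at v = (ε, …, ε), and satisfies 1 − e^{−dε/(2r)} ≤ 1 − (1 − ε/(2r))ᵈ ≤ 1 − 4^{−dε/(2r)}. -/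
/-!
Both measures are normalized Lebesgue measure on cubes of equal volume, `C` and `C + v`. For two
sets of equal finite measure, the distance between the restricted measures is attained at
`C \ (C + v)` and equals `vol C - vol (C ∩ (C + v))`. The overlap is a box with sides
`max 0 (2r - |vᵢ|)`, which gives `tv = 1 - ∏ᵢ max 0 (1 - |vᵢ|/(2r))`; this is increasing in each
`|vᵢ|`, hence maximal at `v = (ε, …, ε)`. The bounds are the `d`-th powers of
`4^{-z} ≤ 1 - z ≤ e^{-z}` for `z = ε/(2r) ∈ [0, 1/2]`.
-/

open MeasureTheory

/-- The uniform distribution on the ℓ∞ ball of radius `r` centered at the origin in ℝᵈ. -/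
noncomputable def uniformCube (d : ℕ) (r : ℝ) : Measure (EuclideanSpace ℝ (Fin d)) :=
  (ENNReal.ofReal ((2 * r) ^ d))⁻¹ •
    volume.restrict {x : EuclideanSpace ℝ (Fin d) | ∀ i, |x i| ≤ r}

open Set ENNReal WithLp

section TotalVariation

variable {α : Type*} [MeasurableSpace α]

lemma tv_eq_of_forall_le {P Q : Measure α} {m : ℝ}
    (hle : ∀ A, MeasurableSet A → |(P A).toReal - (Q A).toReal| ≤ m)
    {A₀ : Set α} (hA₀ : MeasurableSet A₀) (heq : |(P A₀).toReal - (Q A₀).toReal| = m) :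
    tv P Q = m := by
  have : Nonempty {s : Set α // MeasurableSet s} := ⟨⟨A₀, hA₀⟩⟩
  exact ciSup_eq_of_forall_le_of_forall_lt_exists_gt (fun A => hle A.1 A.2)
    fun w hw => ⟨⟨A₀, hA₀⟩, heq ▸ hw⟩

lemma tv_smul (c : ℝ≥0∞) (P Q : Measure α) : tv (c • P) (c • Q) = c.toReal * tv P Q := by
  simp only [tv, Measure.smul_apply, smul_eq_mul, toReal_mul, ← mul_sub, abs_mul, abs_toReal]
  exact (Real.mul_iSup_of_nonneg toReal_nonneg _).symm

lemma tv_restrict_of_measure_eq {μ : Measure α} {s t : Set α} (hs : MeasurableSet s)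
    (ht : MeasurableSet t) (hst : μ s = μ t) (hfin : μ s ≠ ∞) :
    tv (μ.restrict s) (μ.restrict t) = μ.real s - μ.real (s ∩ t) := by
  have hfin' : μ t ≠ ∞ := hst ▸ hfin
  have hreal : μ.real s = μ.real t := by simp only [measureReal_def, hst]
  have hs_sdiff : μ.real (s \ t) = μ.real s - μ.real (s ∩ t) := by
    linarith [measureReal_inter_add_sdiff (μ := μ) ht hfin]
  have ht_sdiff : μ.real (t \ s) = μ.real s - μ.real (s ∩ t) := by
    have := measureReal_inter_add_sdiff (μ := μ) hs hfin'
    rw [inter_comm] at this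
    linarith
  -- `μ (A ∩ s) - μ (A ∩ t) = μ (A ∩ s \ t) - μ (A ∩ t \ s)`, a difference of two numbers in
  -- `[0, μ (s \ t)]`, and `A = s \ t` attains the bound.
  refine tv_eq_of_forall_le (fun A hA => ?_) (hs.diff ht) ?_
  · simp only [Measure.restrict_apply hA, ← measureReal_def]
    have hAs := measureReal_inter_add_sdiff (μ := μ) (s := A ∩ s) ht
      (measure_ne_top_of_subset inter_subset_right hfin)
    have hAt := measureReal_inter_add_sdiff (μ := μ) (s := A ∩ t) hs
      (measure_ne_top_of_subset inter_subset_right hfin')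
    have hcommon : A ∩ t ∩ s = A ∩ s ∩ t := by rw [inter_right_comm]
    have hs_le : μ.real ((A ∩ s) \ t) ≤ μ.real (s \ t) :=
      measureReal_mono (sdiff_subset_sdiff_left inter_subset_right)
        (measure_ne_top_of_subset sdiff_subset hfin)
    have ht_le : μ.real ((A ∩ t) \ s) ≤ μ.real (t \ s) :=
      measureReal_mono (sdiff_subset_sdiff_left inter_subset_right)
        (measure_ne_top_of_subset sdiff_subset hfin')
    rw [hcommon] at hAt
    have hs_nonneg : 0 ≤ μ.real ((A ∩ s) \ t) := measureReal_nonneg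
    have ht_nonneg : 0 ≤ μ.real ((A ∩ t) \ s) := measureReal_nonneg
    rw [abs_le]
    constructor <;> linarith
  · rw [Measure.restrict_apply (hs.diff ht), Measure.restrict_apply (hs.diff ht),
      inter_eq_left.2 sdiff_subset, sdiff_inter_self, measure_empty, toReal_zero, sub_zero,
      ← measureReal_def, hs_sdiff, abs_of_nonneg (hs_sdiff ▸ measureReal_nonneg)]

end TotalVariation

lemma MeasureTheory.Measure.map_add_right_restrict {G : Type*} [MeasurableSpace G] [AddGroup G]
    [MeasurableAdd G] (μ : Measure G) [μ.IsAddRightInvariant] (s : Set G) (v : G) :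
    (μ.restrict s).map (· + v) = μ.restrict ((· - v) ⁻¹' s) := by
  ext A hA
  rw [Measure.map_apply (measurable_add_const v) hA, Measure.restrict_apply hA,
    Measure.restrict_apply (measurable_add_const v hA),
    ← measure_preimage_add_right μ v (A ∩ (· - v) ⁻¹' s)]
  congr 1
  ext x
  simp

section Cube

variable {ι : Type*}

lemma EuclideanSpace.volume_preimage_ofLp_Icc [Fintype ι] (a b : ι → ℝ) :
    volume (ofLp ⁻¹' Icc a b : Set (EuclideanSpace ℝ ι)) = ∏ i, ENNReal.ofReal (b i - a i) := by
  rw [(PiLp.volume_preserving_ofLp ι).measure_preimage measurableSet_Icc.nullMeasurableSet,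
    Real.volume_Icc_pi]

lemma EuclideanSpace.preimage_sub_preimage_ofLp_Icc (a b : ι → ℝ) (v : EuclideanSpace ℝ ι) :
    (· - v) ⁻¹' (ofLp ⁻¹' Icc a b) = ofLp ⁻¹' Icc (a + ofLp v) (b + ofLp v) := by
  rw [← preimage_sub_const_Icc, preimage_preimage, preimage_preimage]
  simp only [ofLp_sub]

lemma EuclideanSpace.setOf_forall_abs_le_eq_preimage_ofLp_Icc (r : ℝ) :
    {x : EuclideanSpace ℝ ι | ∀ i, |x i| ≤ r} = ofLp ⁻¹' Icc (fun _ => -r) (fun _ => r) := by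
  ext x
  simp [abs_le, Pi.le_def, forall_and]

end Cube

lemma min_sub_max_eq_two_mul_sub_abs (r x : ℝ) :
    min r (r + x) - max (-r) (-r + x) = 2 * r - |x| := by
  rcases le_total 0 x with hx | hx
  · rw [min_eq_left (by linarith), max_eq_right (by linarith), abs_of_nonneg hx]; ring
  · rw [min_eq_right (by linarith), max_eq_left (by linarith), abs_of_nonpos hx]; ring

theorem tv_uniformCube_map_add (d : ℕ) {r : ℝ} (hr : 0 < r) (v : EuclideanSpace ℝ (Fin d)) :
    tv (uniformCube d r) ((uniformCube d r).map (· + v)) =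
      1 - ∏ i, max 0 (1 - |v i| / (2 * r)) := by
  set C : Set (EuclideanSpace ℝ (Fin d)) := ofLp ⁻¹' Icc (fun _ => -r) (fun _ => r)
  set Cv : Set (EuclideanSpace ℝ (Fin d)) :=
    ofLp ⁻¹' Icc ((fun _ => -r) + ofLp v) ((fun _ => r) + ofLp v)
  have hC : MeasurableSet C :=
    measurableSet_Icc.preimage (PiLp.volume_preserving_ofLp _).measurable
  have hCv : MeasurableSet Cv :=
    measurableSet_Icc.preimage (PiLp.volume_preserving_ofLp _).measurable
  have hvolC : volume C = ENNReal.ofReal ((2 * r) ^ d) := by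
    simp only [C, EuclideanSpace.volume_preimage_ofLp_Icc, Finset.prod_const, Finset.card_univ,
      Fintype.card_fin, ← ofReal_pow (by linarith : 0 ≤ r - -r)]
    ring_nf
  have hvolCv : volume C = volume Cv := by
    simp only [C, Cv, EuclideanSpace.volume_preimage_ofLp_Icc, Pi.add_apply,
      add_sub_add_right_eq_sub]
  have hU : uniformCube d r = (volume C)⁻¹ • volume.restrict C := by
    rw [uniformCube, hvolC, EuclideanSpace.setOf_forall_abs_le_eq_preimage_ofLp_Icc]
  have hUv : (uniformCube d r).map (· + v) = (volume C)⁻¹ • volume.restrict Cv := by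
    rw [hU, Measure.map_smul, Measure.map_add_right_restrict,
      EuclideanSpace.preimage_sub_preimage_ofLp_Icc]
  have hoverlap : volume.real (C ∩ Cv) = (2 * r) ^ d * ∏ i, max 0 (1 - |v i| / (2 * r)) := by
    have hfactor (x : ℝ) : max (2 * r - |x|) 0 = 2 * r * max 0 (1 - |x| / (2 * r)) := by
      rw [mul_max_of_nonneg _ _ (by positivity), mul_zero, mul_sub, mul_one,
        mul_div_cancel₀ _ (by positivity), max_comm]
    simp only [C, Cv, ← preimage_inter, Icc_inter_Icc, measureReal_def,
      EuclideanSpace.volume_preimage_ofLp_Icc, toReal_prod, toReal_ofReal', Pi.inf_apply,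
      Pi.sup_apply, Pi.add_apply, min_sub_max_eq_two_mul_sub_abs, hfactor,
      Finset.prod_mul_distrib, Finset.prod_const, Finset.card_univ, Fintype.card_fin, mul_pow]
  rw [hUv, hU, tv_smul, tv_restrict_of_measure_eq hC hCv hvolCv (hvolC ▸ ofReal_ne_top),
    hoverlap, measureReal_def, hvolC, toReal_inv, toReal_ofReal (by positivity)]
  field_simp

lemma one_sub_pow_le_exp_neg_mul (n : ℕ) {z : ℝ} (hz : z ≤ 1) :
    (1 - z) ^ n ≤ Real.exp (-(n * z)) :=
  calc (1 - z) ^ n ≤ Real.exp (-z) ^ n :=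
        pow_le_pow_left₀ (by linarith) (Real.one_sub_le_exp_neg z) n
    _ = Real.exp (-(n * z)) := by rw [← Real.exp_nat_mul, mul_neg]

lemma four_rpow_neg_le_one_sub {z : ℝ} (hz0 : 0 ≤ z) (hz : z ≤ 1 / 2) :
    (4 : ℝ) ^ (-z) ≤ 1 - z := by
  have hbernoulli := rpow_one_add_le_one_add_mul_self (s := -1 / 2) (by norm_num)
    (p := 2 * z) (by linarith) (by linarith)
  have h4 : (4 : ℝ) ^ (-z) = (1 + -1 / 2) ^ (2 * z) := by
    rw [Real.rpow_neg (by norm_num), ← Real.inv_rpow (by norm_num), Real.rpow_mul (by norm_num)]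
    norm_num
  linarith

lemma four_rpow_neg_mul_le_one_sub_pow (n : ℕ) {z : ℝ} (hz0 : 0 ≤ z) (hz : z ≤ 1 / 2) :
    (4 : ℝ) ^ (-(n * z)) ≤ (1 - z) ^ n :=
  calc (4 : ℝ) ^ (-(n * z)) = ((4 : ℝ) ^ (-z)) ^ n := by
        rw [← Real.rpow_mul_natCast (by norm_num), neg_mul, mul_comm]
    _ ≤ (1 - z) ^ n := pow_le_pow_left₀ (by positivity) (four_rpow_neg_le_one_sub hz0 hz) n

theorem stmt17_general (d : ℕ) (r ε : ℝ) (hr : 0 < r) (hε0 : 0 ≤ ε) (hεr : ε ≤ r) :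
    tv (uniformCube d r)
        ((uniformCube d r).map (· + ((EuclideanSpace.equiv (Fin d) ℝ).symm fun _ => ε))) =
      1 - (1 - ε / (2 * r)) ^ d ∧
    (∀ v : EuclideanSpace ℝ (Fin d), (∀ i, |v i| ≤ ε) →
      tv (uniformCube d r) ((uniformCube d r).map (· + v)) ≤ 1 - (1 - ε / (2 * r)) ^ d) ∧
    1 - Real.exp (-((d : ℝ) * ε) / (2 * r)) ≤ 1 - (1 - ε / (2 * r)) ^ d ∧
    1 - (1 - ε / (2 * r)) ^ d ≤ 1 - (4 : ℝ) ^ (-((d : ℝ) * ε) / (2 * r)) := by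
  set z := ε / (2 * r) with hz
  have hz0 : 0 ≤ z := by positivity
  have hz_half : z ≤ 1 / 2 := by rw [hz, div_le_iff₀ (by positivity)]; linarith
  have hexponent : -((d : ℝ) * ε) / (2 * r) = -(d * z) := by rw [hz]; ring
  refine ⟨?_, fun v hv => ?_, ?_, ?_⟩
  · rw [tv_uniformCube_map_add d hr]
    simp [abs_of_nonneg hε0, ← hz, max_eq_right (by linarith : 0 ≤ 1 - z)]
  · rw [tv_uniformCube_map_add d hr]
    gcongr 1 - ?_
    calc (1 - z) ^ d = ∏ _i : Fin d, (1 - z) := by simp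
      _ ≤ ∏ i, max 0 (1 - |v i| / (2 * r)) :=
        Finset.prod_le_prod (fun _ _ => by linarith) fun i _ =>
          le_max_of_le_right (by rw [hz]; gcongr; exact hv i)
  · rw [hexponent]
    linarith [one_sub_pow_le_exp_neg_mul d (z := z) (by linarith)]
  · rw [hexponent]
    linarith [four_rpow_neg_mul_le_one_sub_pow d hz0 hz_half]

theorem stmt17 (d : ℕ) (hd : 1 ≤ d) (r ε : ℝ) (hr : 0 < r) (hε0 : 0 ≤ ε) (hεr : ε ≤ r) :
    tv (uniformCube d r)
        ((uniformCube d r).map (· + ((EuclideanSpace.equiv (Fin d) ℝ).symm fun _ => ε))) =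
      1 - (1 - ε / (2 * r)) ^ d ∧
    (∀ v : EuclideanSpace ℝ (Fin d), (∀ i, |v i| ≤ ε) →
      tv (uniformCube d r) ((uniformCube d r).map (· + v)) ≤ 1 - (1 - ε / (2 * r)) ^ d) ∧
    1 - Real.exp (-((d : ℝ) * ε) / (2 * r)) ≤ 1 - (1 - ε / (2 * r)) ^ d ∧
    1 - (1 - ε / (2 * r)) ^ d ≤ 1 - (4 : ℝ) ^ (-((d : ℝ) * ε) / (2 * r)) :=
  stmt17_general d r ε hr hε0 hεr
end
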